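/- For any permutations σ and π with σ ≤ π in the classical permutation pattern poset 𝓟, the interval [σ^∅, π^∅] in the mesh pattern poset 𝓜 is isomorphic as a poset to the interval [σ, π] in 𝓟; consequently μ_𝓜(σ^∅, π^∅) = μ_𝓟(σ, π). -/

import Mathlib

/-!
# The poset of mesh patterns

A mesh pattern is a permutation of `{1, ..., len}` together with a set of shaded
boxes in the `(len+1) × (len+1)` grid (boxes are indexed by their south-west corner,
so boxes have coordinates in `{0, ..., len} × {0, ..., len}`).

We normalise the permutation as a function `ℕ → ℕ` (using 1-based indexing) which is
`0` outside of `[1, len]`; this makes equality of mesh patterns coincide with equality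
of the underlying data.
-/

structure MeshPattern where
  len : ℕ
  perm : ℕ → ℕ
  sh : Finset (ℕ × ℕ)
  perm_mem : ∀ i, 1 ≤ i → i ≤ len → 1 ≤ perm i ∧ perm i ≤ len
  perm_zero : ∀ i, i = 0 ∨ len < i → perm i = 0
  perm_inj : ∀ i j, 1 ≤ i → i ≤ len → 1 ≤ j → j ≤ len → perm i = perm j → i = j
  perm_surj : ∀ v, 1 ≤ v → v ≤ len → ∃ i, 1 ≤ i ∧ i ≤ len ∧ perm i = v
  sh_mem : ∀ q ∈ sh, q.1 ≤ len ∧ q.2 ≤ len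

namespace MeshPattern

/-- The (1-based) position of the value `v` in the underlying permutation of `m`. -/
noncomputable def pos (m : MeshPattern) (v : ℕ) : ℕ := Function.invFun m.perm v

/-- The dimension of a mesh pattern: length of the permutation plus number of shaded boxes. -/
def dim (m : MeshPattern) : ℕ := m.len + m.sh.card

/-- Given (the position map of an occurrence) `η` of `m` in `p`, the extended column
boundary map: pattern column boundary `i` (for `0 ≤ i ≤ m.len + 1`) is sent to the
corresponding column boundary in `p`.  Boxes of `p` with first coordinate `a` satisfying
`colExt m p η i ≤ a < colExt m p η (i+1)` are exactly the boxes lying horizontally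
within the region corresponding to pattern boxes with first coordinate `i`. -/
def colExt (m p : MeshPattern) (η : ℕ → ℕ) (i : ℕ) : ℕ :=
  if i = 0 then 0 else if i ≤ m.len then η i else p.len + 1

/-- The analogous extended row (value) boundary map. -/
noncomputable def valExt (m p : MeshPattern) (η : ℕ → ℕ) (j : ℕ) : ℕ :=
  if j = 0 then 0 else if j ≤ m.len then p.perm (η (m.pos j)) else p.len + 1

/-- The box `(a, b)` of `p` lies in the region `R_η(i, j)` of the box `(i, j)` of `m`. -/
def inRegion (m p : MeshPattern) (η : ℕ → ℕ) (i j a b : ℕ) : Prop :=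
  colExt m p η i ≤ a ∧ a < colExt m p η (i + 1) ∧
    valExt m p η j ≤ b ∧ b < valExt m p η (j + 1)

/-- The point of `p` at position `y` lies in the open interior of the region `R_η(i, j)`. -/
def interiorPt (m p : MeshPattern) (η : ℕ → ℕ) (i j y : ℕ) : Prop :=
  colExt m p η i < y ∧ y < colExt m p η (i + 1) ∧
    valExt m p η j < p.perm y ∧ p.perm y < valExt m p η (j + 1)

/-- `η` is an occurrence of the mesh pattern `m` in the mesh pattern `p`:
a (normalised) strictly increasing choice of positions realising the underlying
classical pattern, such that for every shaded box of `m` the corresponding region of `p`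
contains no point of `p` in its interior and consists entirely of shaded boxes of `p`. -/
structure IsOcc (m p : MeshPattern) (η : ℕ → ℕ) : Prop where
  zero : ∀ i, i = 0 ∨ m.len < i → η i = 0
  mem : ∀ i, 1 ≤ i → i ≤ m.len → 1 ≤ η i ∧ η i ≤ p.len
  mono : ∀ i j, 1 ≤ i → i < j → j ≤ m.len → η i < η j
  pattern : ∀ i j, 1 ≤ i → i ≤ m.len → 1 ≤ j → j ≤ m.len →
    (m.perm i < m.perm j ↔ p.perm (η i) < p.perm (η j))
  no_point : ∀ q ∈ m.sh, ∀ y, 1 ≤ y → y ≤ p.len → ¬ interiorPt m p η q.1 q.2 y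
  shaded : ∀ q ∈ m.sh, ∀ a b, inRegion m p η q.1 q.2 a b → (a, b) ∈ p.sh

/-- The mesh pattern poset: `m ≤ p` iff there is an occurrence of `m` in `p`. -/
instance : LE MeshPattern := ⟨fun m p => ∃ η, IsOcc m p η⟩

instance : LT MeshPattern := ⟨fun m p => m ≤ p ∧ m ≠ p⟩

/-- `b` covers `a` in the mesh pattern poset. -/
def CovByM (a b : MeshPattern) : Prop := a < b ∧ ¬ ∃ z, a < z ∧ z < b

open Classical in
/-- The Möbius function of a (locally finite) partial order `r`, computed with a fuel
parameter: `muFuel r n a b` is the Möbius function `μ(a, b)` provided `n` is at least the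
length of the longest chain from `a` to `b` (with the convention `μ(a, b) = 0` if
`¬ r a b`). -/
noncomputable def muFuel {α : Type*} (r : α → α → Prop) : ℕ → α → α → ℤ
  | 0, a, b => if a = b then 1 else 0
  | n + 1, a, b =>
      if a = b then 1
      else if r a b then - ∑ᶠ c ∈ {c | r a c ∧ r c b ∧ c ≠ b}, muFuel r n a c
      else 0

/-- The Möbius function of the mesh pattern poset.  Since every chain from `m` to `p` has
length at most `dim p`, the fuel `dim p + 1` is sufficient, so this is the genuine Möbius
function: `mu m m = 1`, `mu m p = -∑_{m ≤ c < p} mu m c` for `m < p`, and `mu m p = 0`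
when `m ≰ p`. -/
noncomputable def mu (m p : MeshPattern) : ℤ := muFuel (· ≤ ·) (p.dim + 1) m p

/-- The classical permutation poset `𝓟`, realised as the subposet of unshaded mesh
patterns (for unshaded patterns, mesh occurrence is exactly classical pattern
containment).  Its Möbius function. -/
noncomputable def muP (σ π : {m : MeshPattern // m.sh = ∅}) : ℤ :=
  muFuel (· ≤ ·) (π.1.len + 1) σ π

/-- The mesh pattern with underlying identity permutation of length `n`
and shaded boxes `s`. -/
def ofId (n : ℕ) (s : Finset (ℕ × ℕ)) (hs : ∀ q ∈ s, q.1 ≤ n ∧ q.2 ≤ n) : MeshPattern where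
  len := n
  perm := fun i => if 1 ≤ i ∧ i ≤ n then i else 0
  sh := s
  perm_mem := by intro i h1 h2; (try dsimp only); rw [if_pos ⟨h1, h2⟩]; omega
  perm_zero := by intro i h; (try dsimp only); rw [if_neg]; omega
  perm_inj := by intro i j h1 h2 h3 h4 h; (try dsimp only at h); rw [if_pos ⟨h1, h2⟩, if_pos ⟨h3, h4⟩] at h; omega
  perm_surj := by
    intro v h1 h2; exact ⟨v, h1, h2, by (try dsimp only); rw [if_pos ⟨h1, h2⟩]⟩
  sh_mem := hs

/-- The mesh pattern with underlying decreasing permutation of length `n`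
and shaded boxes `s`. -/
def ofRev (n : ℕ) (s : Finset (ℕ × ℕ)) (hs : ∀ q ∈ s, q.1 ≤ n ∧ q.2 ≤ n) : MeshPattern where
  len := n
  perm := fun i => if 1 ≤ i ∧ i ≤ n then n + 1 - i else 0
  sh := s
  perm_mem := by intro i h1 h2; (try dsimp only); rw [if_pos ⟨h1, h2⟩]; omega
  perm_zero := by intro i h; (try dsimp only); rw [if_neg]; omega
  perm_inj := by intro i j h1 h2 h3 h4 h; (try dsimp only at h); rw [if_pos ⟨h1, h2⟩, if_pos ⟨h3, h4⟩] at h; omega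
  perm_surj := by
    intro v h1 h2
    exact ⟨n + 1 - v, by omega, by omega, by (try dsimp only); rw [if_pos ⟨by omega, by omega⟩]; omega⟩
  sh_mem := hs

/-- The unshaded singleton mesh pattern `1^∅`. -/
def one0 : MeshPattern := ofId 1 ∅ (by simp)

/-- The empty mesh pattern `ε^∅`. -/
def eps0 : MeshPattern := ofId 0 ∅ (by simp)

/-- The empty mesh pattern `ε^{(0,0)}` with its single box shaded. -/
def eps00 : MeshPattern := ofId 0 {(0, 0)} (by decide)

/-- The singleton mesh patterns `1^{(a,b)}` for `a b ∈ {0,1}`. -/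
def one00 : MeshPattern := ofId 1 {(0, 0)} (by decide)
def one10 : MeshPattern := ofId 1 {(1, 0)} (by decide)
def one01 : MeshPattern := ofId 1 {(0, 1)} (by decide)
def one11 : MeshPattern := ofId 1 {(1, 1)} (by decide)

/-- The mesh pattern `21^{(0,0),(1,0)}`. -/
def pat21 : MeshPattern := ofRev 2 {(0, 0), (1, 0)} (by decide)

/-- Replace the shading of `p` by a subset `A ⊆ sh p` (same underlying permutation):
this is the mesh pattern `(cl p)^A`. -/
def reshade (p : MeshPattern) (A : Finset (ℕ × ℕ)) (hA : A ⊆ p.sh) : MeshPattern :=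
  { p with sh := A, sh_mem := fun q hq => p.sh_mem q (hA hq) }

/-- The occurrence `η` of `s` in `p` uses the shaded box `(a, b) ∈ sh p`. -/
def UsesBox (s p : MeshPattern) (η : ℕ → ℕ) (a b : ℕ) : Prop :=
  (a, b) ∈ p.sh ∧ ∃ i j, (i, j) ∈ s.sh ∧ inRegion s p η i j a b

/-- The position map of the occurrence of `p − x` in `p` avoiding the point at
position `x`. -/
def etaDel (p : MeshPattern) (x : ℕ) : ℕ → ℕ := fun i =>
  if 1 ≤ i ∧ i ≤ p.len - 1 then (if i < x then i else i + 1) else 0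

/-- The underlying permutation of the pattern obtained from `p` by deleting the point at
position `x`. -/
def delPerm (p : MeshPattern) (x : ℕ) : ℕ → ℕ := fun i =>
  if 1 ≤ i ∧ i ≤ p.len - 1 then
    (if p.perm (etaDel p x i) < p.perm x then p.perm (etaDel p x i)
     else p.perm (etaDel p x i) - 1)
  else 0

/-- `q` is the mesh pattern `p − x` obtained from `p` by deleting the point at position
`x` (where `1 ≤ x ≤ len p`): the underlying permutation is obtained by deleting that
letter, and a box of `q` is shaded exactly when the corresponding region of `p` (under
the occurrence `etaDel p x`) is entirely shaded and contains no point of `p` in its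
interior.  In particular `etaDel p x` is an occurrence of `q` in `p`. -/
def IsDeletion (p : MeshPattern) (x : ℕ) (q : MeshPattern) : Prop :=
  1 ≤ x ∧ x ≤ p.len ∧ q.len + 1 = p.len ∧ q.perm = delPerm p x ∧
    ∀ i j : ℕ, ((i, j) ∈ q.sh ↔ i ≤ q.len ∧ j ≤ q.len ∧
      (∀ a b, inRegion q p (etaDel p x) i j a b → (a, b) ∈ p.sh) ∧
      ∀ y, 1 ≤ y → y ≤ p.len → ¬ interiorPt q p (etaDel p x) i j y)

/-- Deleting the point at position `x` of `p` (with `q = p − x`) merges shadings: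
some shaded box of `q` corresponds to more than one shaded box of `p`. -/
def MergesShadings (p : MeshPattern) (x : ℕ) (q : MeshPattern) : Prop :=
  ∃ i j, (i, j) ∈ q.sh ∧ ∃ a b a' b', (a, b) ≠ (a', b') ∧ (a, b) ∈ p.sh ∧
    (a', b') ∈ p.sh ∧ inRegion q p (etaDel p x) i j a b ∧
    inRegion q p (etaDel p x) i j a' b'

/-- `f 0 ⋖ f 1 ⋖ ⋯ ⋖ f k` is a maximal chain of length `k` from `a` to `b`. -/
def IsMaxChain (a b : MeshPattern) (k : ℕ) (f : ℕ → MeshPattern) : Prop :=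
  f 0 = a ∧ f k = b ∧ ∀ i < k, CovByM (f i) (f (i + 1))

/-- Underlying permutation of the direct sum `s ⊕ t`. -/
def dsumPerm (s t : MeshPattern) : ℕ → ℕ := fun i =>
  if i ≤ s.len then s.perm i
  else if i ≤ s.len + t.len then t.perm (i - s.len) + s.len
  else 0

/-- Shading of the direct sum `s ⊕ t`: the shadings of `s` and of `t` (translated), where
boxes on the shared boundary are extended to the new boundary (north/east for boxes of
`s`, south/west for boxes of `t`). -/
def dsumSh (s t : MeshPattern) : Finset (ℕ × ℕ) :=
  s.sh ∪ t.sh.image (fun q => (q.1 + s.len, q.2 + s.len)) ∪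
    (s.sh.filter (fun q => q.2 = s.len)).biUnion
      (fun q => (Finset.range (t.len + 1)).image (fun k => (q.1, s.len + k))) ∪
    (s.sh.filter (fun q => q.1 = s.len)).biUnion
      (fun q => (Finset.range (t.len + 1)).image (fun k => (s.len + k, q.2))) ∪
    (t.sh.filter (fun q => q.2 = 0)).biUnion
      (fun q => (Finset.range (s.len + 1)).image (fun k => (q.1 + s.len, k))) ∪
    (t.sh.filter (fun q => q.1 = 0)).biUnion
      (fun q => (Finset.range (s.len + 1)).image (fun k => (k, q.2 + s.len)))

/-- `r = s ⊕ t` is the direct sum of the mesh patterns `s` and `t` (defined when the top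
right corner box of `s` and the bottom left corner box of `t` are not shaded). -/
def IsDSum (s t r : MeshPattern) : Prop :=
  (s.len, s.len) ∉ s.sh ∧ (0, 0) ∉ t.sh ∧
    r.len = s.len + t.len ∧ r.perm = dsumPerm s t ∧ r.sh = dsumSh s t

/-- A mesh pattern is indecomposable if it cannot be written as a direct sum `a ⊕ b`
with neither `a` nor `b` equal to it. -/
def Indecomposable (m : MeshPattern) : Prop :=
  ¬ ∃ s t, s ≠ m ∧ t ≠ m ∧ IsDSum s t m

/-- `SumOfList L m`: `m` is the direct sum of the list `L` of mesh patterns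
(the empty list summing to the empty pattern `ε^∅`). -/
def SumOfList : List MeshPattern → MeshPattern → Prop
  | [], m => m.len = 0 ∧ m.sh = ∅
  | [a], m => a = m
  | a :: b :: rest, m => ∃ r, SumOfList (b :: rest) r ∧ IsDSum a r m

/-- Underlying permutation of the skew sum `s ⊖ t`. -/
def sksumPerm (s t : MeshPattern) : ℕ → ℕ := fun i =>
  if i = 0 then 0
  else if i ≤ s.len then s.perm i + t.len
  else if i ≤ s.len + t.len then t.perm (i - s.len)
  else 0

/-- Shading of the skew sum `s ⊖ t` (s placed to the north west of `t`), with boxes on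
the shared boundary extended to the new boundary. -/
def sksumSh (s t : MeshPattern) : Finset (ℕ × ℕ) :=
  s.sh.image (fun q => (q.1, q.2 + t.len)) ∪ t.sh.image (fun q => (q.1 + s.len, q.2)) ∪
    (s.sh.filter (fun q => q.1 = s.len)).biUnion
      (fun q => (Finset.range (t.len + 1)).image (fun k => (s.len + k, q.2 + t.len))) ∪
    (s.sh.filter (fun q => q.2 = 0)).biUnion
      (fun q => (Finset.range (t.len + 1)).image (fun k => (q.1, k))) ∪
    (t.sh.filter (fun q => q.2 = t.len)).biUnion
      (fun q => (Finset.range (s.len + 1)).image (fun k => (q.1 + s.len, t.len + k))) ∪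
    (t.sh.filter (fun q => q.1 = 0)).biUnion
      (fun q => (Finset.range (s.len + 1)).image (fun k => (k, q.2)))

/-- `r = s ⊖ t` is the skew sum of the mesh patterns `s` and `t` (defined when the bottom
right corner box of `s` and the top left corner box of `t` are not shaded). -/
def IsSkewSum (s t r : MeshPattern) : Prop :=
  (s.len, 0) ∉ s.sh ∧ (0, t.len) ∉ t.sh ∧
    r.len = s.len + t.len ∧ r.perm = sksumPerm s t ∧ r.sh = sksumSh s t

/-- A mesh pattern is skew-indecomposable if it cannot be written as a skew sum `a ⊖ b`
with neither `a` nor `b` equal to it. -/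
def SkewIndecomposable (m : MeshPattern) : Prop :=
  ¬ ∃ s t, s ≠ m ∧ t ≠ m ∧ IsSkewSum s t m

/-- Connectivity (zig-zag of comparabilities) inside a subset `I` of the mesh pattern
poset. -/
def ConnIn (I : Set MeshPattern) (a b : MeshPattern) : Prop :=
  Relation.ReflTransGen (fun u v => u ∈ I ∧ v ∈ I ∧ (u ≤ v ∨ v ≤ u)) a b

/-- The interval `[m, p]` is strongly disconnected: its open interior has at least two
connected components each containing more than one element. -/
def StronglyDisconnectedInterval (m p : MeshPattern) : Prop :=
  ∃ a b, (m < a ∧ a < p) ∧ (m < b ∧ b < p) ∧ ¬ ConnIn {c | m < c ∧ c < p} a b ∧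
    (∃ a', (m < a' ∧ a' < p) ∧ a' ≠ a ∧ ConnIn {c | m < c ∧ c < p} a a') ∧
    (∃ b', (m < b' ∧ b' < p) ∧ b' ≠ b ∧ ConnIn {c | m < c ∧ c < p} b b')

/-- The occurrence of `m` in `m ⊕ m` (or `m ⊖ m`) as the first `|m|` points. -/
def eta1 (m : MeshPattern) : ℕ → ℕ := fun i => if 1 ≤ i ∧ i ≤ m.len then i else 0

/-- The occurrence of `m` in `m ⊕ m` (or `m ⊖ m`) as the last `|m|` points. -/
def eta2 (m : MeshPattern) : ℕ → ℕ := fun i => if 1 ≤ i ∧ i ≤ m.len then i + m.len else 0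

/-- `i` (with `2 ≤ i ≤ len`) is the position of an adjacency tail: the letter at
position `i` differs by one from the letter at position `i - 1`. -/
def IsAdjTail (m : MeshPattern) (i : ℕ) : Prop :=
  2 ≤ i ∧ i ≤ m.len ∧ (m.perm i = m.perm (i - 1) + 1 ∨ m.perm (i - 1) = m.perm i + 1)

open Classical in
/-- `adj(cl m)`: the number of adjacency tails of the underlying permutation of `m`. -/
noncomputable def adjCount (m : MeshPattern) : ℕ :=
  ((Finset.range (m.len + 1)).filter (fun i => IsAdjTail m i)).card

/-- The total number of mesh patterns of length `n`. -/
def Tcount (n : ℕ) : ℕ := n.factorial * 2 ^ ((n + 1) ^ 2)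

end MeshPattern

/-- Binary words, partially ordered by (not necessarily contiguous) subword containment:
the poset `𝓦`. -/
structure Word where
  toList : List Bool

instance : LE Word := ⟨fun u w => u.toList.Sublist w.toList⟩

/-- The binary word associated to a mesh pattern `m` in the class `Γ`: it has length
`|m| - 1`, and for each letter `i` with `2 ≤ i ≤ |m|` the corresponding entry is
`false` (i.e. `0`) if the letter `i` appears before the letter `1` in `cl m`,
and `true` (i.e. `1`) otherwise. -/
noncomputable def MeshPattern.wordOf (m : MeshPattern) : List Bool :=
  (List.range (m.len - 1)).map (fun k => if m.pos (k + 2) < m.pos 1 then false else true)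

namespace MeshPattern

/-! For an unshaded `p`, every `c ≤ p` is unshaded: a shaded box `(i, j)` of `c` would force
the nonempty region `R_η(i, j)` of `p` to consist of shaded boxes. So the unshaded patterns
form a down-closed subset of `𝓜`, and passing to a down-closed subset changes neither an
interval nor the Möbius recursion over it. -/

lemma pos_spec (m : MeshPattern) {v : ℕ} (h1 : 1 ≤ v) (h2 : v ≤ m.len) :
    1 ≤ m.pos v ∧ m.pos v ≤ m.len ∧ m.perm (m.pos v) = v := by
  obtain ⟨i, -, -, hi⟩ := m.perm_surj v h1 h2
  have hperm : m.perm (m.pos v) = v := Function.invFun_eq ⟨i, hi⟩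
  have hmem : ¬ (m.pos v = 0 ∨ m.len < m.pos v) := fun h => by
    have := m.perm_zero _ h
    omega
  exact ⟨by omega, by omega, hperm⟩

section Occurrence

variable {m p : MeshPattern} {η : ℕ → ℕ}

lemma IsOcc.perm_pos_mem (hη : IsOcc m p η) {v : ℕ} (h1 : 1 ≤ v) (h2 : v ≤ m.len) :
    1 ≤ p.perm (η (m.pos v)) ∧ p.perm (η (m.pos v)) ≤ p.len :=
  have hpos := m.pos_spec h1 h2
  have hη_mem := hη.mem _ hpos.1 hpos.2.1
  p.perm_mem _ hη_mem.1 hη_mem.2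

lemma colExt_lt_colExt_succ (hη : IsOcc m p η) {i : ℕ} (hi : i ≤ m.len) :
    colExt m p η i < colExt m p η (i + 1) := by
  have hmem := hη.mem i
  have hmem_succ := hη.mem (i + 1)
  have hmono := hη.mono i (i + 1)
  simp only [colExt, Nat.add_one_ne_zero, if_false]
  split_ifs <;> omega

lemma valExt_lt_valExt_succ (hη : IsOcc m p η) {j : ℕ} (hj : j ≤ m.len) :
    valExt m p η j < valExt m p η (j + 1) := by
  simp only [valExt, Nat.add_one_ne_zero, if_false]
  split_ifs with hj0 hj1 hj1
  · exact (hη.perm_pos_mem le_add_self hj1).1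
  · omega
  · obtain ⟨ha1, ha2, ha3⟩ := m.pos_spec (Nat.one_le_iff_ne_zero.2 hj0) hj
    obtain ⟨hb1, hb2, hb3⟩ := m.pos_spec le_add_self hj1
    exact (hη.pattern _ _ ha1 ha2 hb1 hb2).1 (by omega)
  · exact Nat.lt_succ_of_le (hη.perm_pos_mem (Nat.one_le_iff_ne_zero.2 hj0) hj).2

lemma sh_eq_empty_of_le {c : MeshPattern} (h : c ≤ p) (hp : p.sh = ∅) : c.sh = ∅ := by
  obtain ⟨η, hη⟩ := h
  refine Finset.eq_empty_of_forall_notMem fun ⟨i, j⟩ hij => ?_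
  have hbox := hη.shaded _ hij (colExt c p η i) (valExt c p η j)
    ⟨le_rfl, colExt_lt_colExt_succ hη (c.sh_mem _ hij).1,
      le_rfl, valExt_lt_valExt_succ hη (c.sh_mem _ hij).2⟩
  simp [hp] at hbox

end Occurrence

lemma dim_eq_len_of_sh_eq_empty {m : MeshPattern} (hm : m.sh = ∅) : m.dim = m.len := by
  simp [dim, hm]

section DownClosed

variable {α : Type*} [LE α] {P : α → Prop}

def intervalSubtypeOrderIso (hP : ∀ c b, c ≤ b → P b → P c) (a b : Subtype P) :
    {c : α // a.1 ≤ c ∧ c ≤ b.1} ≃o {c : Subtype P // a ≤ c ∧ c ≤ b} where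
  toFun c := ⟨⟨c.1, hP _ _ c.2.2 b.2⟩, c.2⟩
  invFun c := ⟨c.1.1, c.2⟩
  left_inv _ := rfl
  right_inv _ := rfl
  map_rel_iff' := Iff.rfl

lemma muFuel_subtype_val (hP : ∀ c b, c ≤ b → P b → P c) (n : ℕ) (a b : Subtype P) :
    muFuel (· ≤ ·) n a.1 b.1 = muFuel (· ≤ ·) n a b := by
  induction n generalizing b with
  | zero =>
    by_cases hab : a = b
    · rw [muFuel, muFuel, if_pos (congrArg Subtype.val hab), if_pos hab]
    · rw [muFuel, muFuel, if_neg (mt Subtype.ext hab), if_neg hab]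
  | succ n ih =>
    by_cases hab : a = b
    · rw [muFuel, muFuel, if_pos (congrArg Subtype.val hab), if_pos hab]
    rw [muFuel, muFuel, if_neg (mt Subtype.ext hab), if_neg hab]
    by_cases hle : a ≤ b
    swap
    · rw [if_neg (show ¬ a.1 ≤ b.1 from hle), if_neg hle]
    rw [if_pos (show a.1 ≤ b.1 from hle), if_pos hle]
    have hinterval : {c : α | a.1 ≤ c ∧ c ≤ b.1 ∧ c ≠ b.1} =
        Subtype.val '' {c : Subtype P | a ≤ c ∧ c ≤ b ∧ c ≠ b} := by
      ext c
      constructor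
      · rintro ⟨hac, hcb, hne⟩
        exact ⟨⟨c, hP _ _ hcb b.2⟩, ⟨hac, hcb, fun h => hne (congrArg Subtype.val h)⟩, rfl⟩
      · rintro ⟨d, ⟨had, hdb, hne⟩, rfl⟩
        exact ⟨had, hdb, fun h => hne (Subtype.ext h)⟩
    rw [hinterval, finsum_mem_image Subtype.val_injective.injOn]
    exact congrArg Neg.neg (finsum_mem_congr rfl fun d _ => ih d)

end DownClosed

theorem interval_unshaded_iso_perm_poset_general (σ π : {m : MeshPattern // m.sh = ∅}) :
    Nonempty ({c : MeshPattern // σ.1 ≤ c ∧ c ≤ π.1} ≃o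
      {c : {m : MeshPattern // m.sh = ∅} // σ ≤ c ∧ c ≤ π}) ∧
    mu σ.1 π.1 = muP σ π := by
  have hdown : ∀ c b : MeshPattern, c ≤ b → b.sh = ∅ → c.sh = ∅ :=
    fun _ _ => sh_eq_empty_of_le
  refine ⟨⟨intervalSubtypeOrderIso hdown σ π⟩, ?_⟩
  rw [mu, muP, dim_eq_len_of_sh_eq_empty π.2]
  exact muFuel_subtype_val hdown _ σ π

/-- For permutations `σ ≤ π` (elements of the classical permutation poset `𝓟`, realised
as unshaded mesh patterns), the interval `[σ^∅, π^∅]` of the mesh pattern poset `𝓜` is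
isomorphic to the interval `[σ, π]` of `𝓟`, and the Möbius functions agree. -/
theorem interval_unshaded_iso_perm_poset (σ π : {m : MeshPattern // m.sh = ∅})
    (h : σ ≤ π) :
    Nonempty ({c : MeshPattern // σ.1 ≤ c ∧ c ≤ π.1} ≃o
      {c : {m : MeshPattern // m.sh = ∅} // σ ≤ c ∧ c ≤ π}) ∧
    mu σ.1 π.1 = muP σ π :=
  interval_unshaded_iso_perm_poset_general σ π

end MeshPattern
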